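/- arXiv:1309.6536 — 9 statements merged into one kernel-verified Lean document; each statement's English description precedes it below -/
import Mathlib

section
/- For real κ with -1<κ<1, the operation x ⊕_κ y = x√(1+κ²y²) + y√(1+κ²x²) on ℝ is associative. -/
noncomputable def ksum (κ x y : ℝ) : ℝ :=
  x * Real.sqrt (1 + κ^2 * y^2) + y * Real.sqrt (1 + κ^2 * x^2)

lemma ksum_sqrt (κ x y : ℝ) :
    Real.sqrt (1 + κ^2 * (ksum κ x y)^2) =
    Real.sqrt (1 + κ^2 * x^2) * Real.sqrt (1 + κ^2 * y^2) + κ^2 * x * y := by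
  set a := Real.sqrt (1 + κ^2 * x^2) with ha
  set b := Real.sqrt (1 + κ^2 * y^2) with hb
  have hx : (0:ℝ) ≤ 1 + κ^2 * x^2 := by positivity
  have hy : (0:ℝ) ≤ 1 + κ^2 * y^2 := by positivity
  have ha2 : a^2 = 1 + κ^2 * x^2 := Real.sq_sqrt hx
  have hb2 : b^2 = 1 + κ^2 * y^2 := Real.sq_sqrt hy
  have ha0 : 0 ≤ a := Real.sqrt_nonneg _
  have hb0 : 0 ≤ b := Real.sqrt_nonneg _
  have hnn : 0 ≤ a * b + κ^2 * x * y := by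
    nlinarith [sq_nonneg (a*b - κ^2*x*y), sq_nonneg (a*b + κ^2*x*y), mul_nonneg ha0 hb0,
      sq_nonneg (κ*x), sq_nonneg (κ*y)]
  have harg : 1 + κ^2 * (ksum κ x y)^2 = (a * b + κ^2 * x * y)^2 := by
    simp only [ksum, ← ha, ← hb]
    nlinarith [ha2, hb2]
  rw [harg, Real.sqrt_sq hnn]

theorem ksum_assoc (κ : ℝ) (h1 : -1 < κ) (h2 : κ < 1) (x y z : ℝ) :
    ksum κ (ksum κ x y) z = ksum κ x (ksum κ y z) := by
  rw [show ksum κ (ksum κ x y) z =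
      ksum κ x y * Real.sqrt (1 + κ^2 * z^2) +
      z * Real.sqrt (1 + κ^2 * (ksum κ x y)^2) from rfl,
    show ksum κ x (ksum κ y z) =
      x * Real.sqrt (1 + κ^2 * (ksum κ y z)^2) +
      ksum κ y z * Real.sqrt (1 + κ^2 * x^2) from rfl,
    ksum_sqrt, ksum_sqrt]
  simp only [ksum]
  ring
end

section
/- For real κ ≠ 0 with -1<κ<1, the real line with the κ-sum x ⊕_κ y = x√(1+κ²y²) + y√(1+κ²x²) forms an abelian group with neutral element 0 and the inverse of x given by -x. -/
lemma ksum_eq (κ : ℝ) (hκ : κ ≠ 0) (x y : ℝ) :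
    ksum κ x y = Real.sinh (Real.arsinh (κ*x) + Real.arsinh (κ*y)) / κ := by
  rw [Real.sinh_add, Real.sinh_arsinh, Real.sinh_arsinh, Real.cosh_arsinh,
    Real.cosh_arsinh, ksum]
  have h1 : 1 + κ^2 * y^2 = 1 + (κ*y)^2 := by ring
  have h2 : 1 + κ^2 * x^2 = 1 + (κ*x)^2 := by ring
  rw [h1, h2]
  field_simp

theorem ksum_abelian_group (κ : ℝ) (hκ : κ ≠ 0) (h1 : -1 < κ) (h2 : κ < 1) :
    (∀ x y z : ℝ, ksum κ (ksum κ x y) z = ksum κ x (ksum κ y z)) ∧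
    (∀ x y : ℝ, ksum κ x y = ksum κ y x) ∧
    (∀ x : ℝ, ksum κ x 0 = x) ∧
    (∀ x : ℝ, ksum κ 0 x = x) ∧
    (∀ x : ℝ, ksum κ x (-x) = 0) := by
  refine ⟨?_, ?_, ?_, ?_, ?_⟩
  · intro x y z
    have key : ∀ a b : ℝ, κ * ksum κ a b =
        Real.sinh (Real.arsinh (κ*a) + Real.arsinh (κ*b)) := by
      intro a b; rw [ksum_eq κ hκ]; field_simp
    rw [ksum_eq κ hκ (ksum κ x y) z, ksum_eq κ hκ x (ksum κ y z), key, key,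
      Real.arsinh_sinh, Real.arsinh_sinh, add_assoc]
  · intro x y; unfold ksum; ring
  · intro x
    simp [ksum]
  · intro x
    simp [ksum]
  · intro x
    unfold ksum
    have : 1 + κ^2 * (-x)^2 = 1 + κ^2 * x^2 := by ring
    rw [this]; ring
end

section
/- For real κ ≠ 0, the map x ↦ (1/κ)·arcsinh(κx) is a bijection from (ℝ, ⊕_κ) to (ℝ, +) satisfying {x ⊕_κ y} = {x} + {y}, i.e. it is a group isomorphism. -/
theorem Real.arsinh_mul_sqrt_add_mul_sqrt (a b : ℝ) :
    Real.arsinh (a * Real.sqrt (1 + b^2) + b * Real.sqrt (1 + a^2))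
      = Real.arsinh a + Real.arsinh b := by
  apply Real.sinh_injective
  rw [Real.sinh_arsinh, Real.sinh_add, Real.sinh_arsinh, Real.sinh_arsinh,
    Real.cosh_arsinh, Real.cosh_arsinh]
  ring

theorem mul_ksum (κ x y : ℝ) : κ * ksum κ x y = ksum 1 (κ * x) (κ * y) := by
  simp only [ksum]
  ring_nf

theorem arsinh_ksum_one (a b : ℝ) :
    Real.arsinh (ksum 1 a b) = Real.arsinh a + Real.arsinh b := by
  simpa only [ksum, one_pow, one_mul] using Real.arsinh_mul_sqrt_add_mul_sqrt a b

theorem ksum_iso (κ : ℝ) (hκ : κ ≠ 0) :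
    Function.Bijective (fun x : ℝ => (1/κ) * Real.arsinh (κ*x)) ∧
    (∀ x y : ℝ, (1/κ) * Real.arsinh (κ * ksum κ x y)
      = (1/κ) * Real.arsinh (κ*x) + (1/κ) * Real.arsinh (κ*y)) := by
  refine ⟨?_, fun x y => ?_⟩
  · exact (mulLeft_bijective₀ _ (one_div_ne_zero hκ)).comp
      (Real.arsinh_bijective.comp (mulLeft_bijective₀ κ hκ))
  · rw [mul_ksum, arsinh_ksum_one, mul_add]
end

section
/- For real κ ≠ 0 with κ² < 1 and all x, y, z ∈ ℝ, the distributive law z ⊗_κ (x ⊕_κ y) = (z ⊗_κ x) ⊕_κ (z ⊗_κ y) holds. -/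
noncomputable def kprod (κ x y : ℝ) : ℝ :=
  (1/κ) * Real.sinh ((1/κ) * Real.arsinh (κ*x) * Real.arsinh (κ*y))

lemma ksum_sinh (κ : ℝ) (hκ : κ ≠ 0) (u v : ℝ) :
    ksum κ ((1/κ) * Real.sinh u) ((1/κ) * Real.sinh v) = (1/κ) * Real.sinh (u + v) := by
  unfold ksum
  have h1 : 1 + κ^2 * ((1/κ) * Real.sinh v)^2 = Real.cosh v ^ 2 := by
    rw [Real.cosh_sq']; field_simp
  have h2 : 1 + κ^2 * ((1/κ) * Real.sinh u)^2 = Real.cosh u ^ 2 := by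
    rw [Real.cosh_sq']; field_simp
  rw [h1, h2, Real.sqrt_sq (Real.cosh_pos v).le, Real.sqrt_sq (Real.cosh_pos u).le,
    Real.sinh_add]
  ring

theorem kprod_distrib (κ : ℝ) (hκ : κ ≠ 0) (hκ2 : κ^2 < 1) (x y z : ℝ) :
    kprod κ z (ksum κ x y) = ksum κ (kprod κ z x) (kprod κ z y) := by
  set a := Real.arsinh (κ*x) with ha
  set b := Real.arsinh (κ*y) with hb
  have hx : x = (1/κ) * Real.sinh a := by rw [ha, Real.sinh_arsinh]; field_simp
  have hy : y = (1/κ) * Real.sinh b := by rw [hb, Real.sinh_arsinh]; field_simp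
  have hs : ksum κ x y = (1/κ) * Real.sinh (a + b) := by
    rw [hx, hy, ksum_sinh κ hκ]
  have hars : Real.arsinh (κ * ksum κ x y) = a + b := by
    rw [hs]
    have : κ * ((1/κ) * Real.sinh (a + b)) = Real.sinh (a + b) := by field_simp
    rw [this, Real.arsinh_sinh]
  unfold kprod
  rw [hars, ksum_sinh κ hκ, mul_add]
end

section
/- For real κ ≠ 0, x ∈ ℝ, and a natural number n, the n-fold κ-sum x ⊕_κ x ⊕_κ ⋯ ⊕_κ x (n copies) equals [n] ⊗_κ x, where [n] = (1/κ)·sinh(κn). -/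
/-- `ksumIter κ n x` is the `n`-fold κ-sum `x ⊕_κ x ⊕_κ ⋯ ⊕_κ x` (`n` copies of `x`). -/
noncomputable def ksumIter (κ : ℝ) : ℕ → ℝ → ℝ
  | 0, _ => 0
  | n + 1, x => ksum κ x (ksumIter κ n x)

/-!
The map `x ↦ arsinh (κ x)` is a bijection `ℝ → ℝ` with inverse `t ↦ (1/κ) sinh t`, and by the
addition formula for `sinh` it carries `⊕_κ` to ordinary addition. Hence the `n`-fold κ-sum of `x`
is `(1/κ) sinh (n · arsinh (κ x))`, which is `[n] ⊗_κ x` because `arsinh (κ [n]) = κ n`.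
-/

open Real

lemma arsinh_mul_one_div_mul_sinh {κ : ℝ} (hκ : κ ≠ 0) (t : ℝ) :
    arsinh (κ * ((1/κ) * sinh t)) = t := by
  rw [← mul_assoc, mul_one_div_cancel hκ, one_mul, arsinh_sinh]

lemma ksum_eq_one_div_mul_sinh_add {κ : ℝ} (hκ : κ ≠ 0) (x y : ℝ) :
    ksum κ x y = (1/κ) * sinh (arsinh (κ * x) + arsinh (κ * y)) := by
  rw [sinh_add, sinh_arsinh, sinh_arsinh, cosh_arsinh, cosh_arsinh, ksum]
  field_simp

lemma ksumIter_eq_one_div_mul_sinh {κ : ℝ} (hκ : κ ≠ 0) (x : ℝ) (n : ℕ) :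
    ksumIter κ n x = (1/κ) * sinh (n * arsinh (κ * x)) := by
  induction n with
  | zero => simp [ksumIter]
  | succ n ih =>
    rw [ksumIter, ih, ksum_eq_one_div_mul_sinh_add hκ, arsinh_mul_one_div_mul_sinh hκ]
    push_cast
    ring_nf

theorem ksumIter_eq_kprod (κ : ℝ) (hκ : κ ≠ 0) (x : ℝ) (n : ℕ) :
    ksumIter κ n x = kprod κ ((1/κ) * Real.sinh (κ * n)) x := by
  rw [ksumIter_eq_one_div_mul_sinh hκ, kprod, arsinh_mul_one_div_mul_sinh hκ,
    ← mul_assoc, one_div_mul_cancel hκ, one_mul]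
end

section
/- For real κ with 0<κ<1 and all x, y ∈ ℝ, exp_κ(x)·exp_κ(y) = exp_κ(x ⊕_κ y), where ⊕_κ is the κ-sum. In particular exp_κ(x)·exp_κ(-x) = 1. -/
noncomputable def kexp (κ x : ℝ) : ℝ :=
  (Real.sqrt (1 + κ^2 * x^2) + κ*x) ^ (1/κ : ℝ)

lemma base_eq (κ x : ℝ) :
    Real.sqrt (1 + κ^2 * x^2) + κ*x = Real.exp (Real.arsinh (κ*x)) := by
  rw [Real.exp_arsinh, mul_pow]
  ring

lemma ksum_key (κ x y : ℝ) :
    κ * ksum κ x y = Real.sinh (Real.arsinh (κ*x) + Real.arsinh (κ*y)) := by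
  rw [Real.sinh_add, Real.sinh_arsinh, Real.sinh_arsinh, Real.cosh_arsinh,
    Real.cosh_arsinh, ksum, mul_pow, mul_pow]
  ring

lemma base_pos (κ x : ℝ) : 0 < Real.sqrt (1 + κ^2 * x^2) + κ*x := by
  rw [base_eq]; exact Real.exp_pos _

lemma base_mul (κ x y : ℝ) :
    (Real.sqrt (1 + κ^2 * x^2) + κ*x) * (Real.sqrt (1 + κ^2 * y^2) + κ*y)
      = Real.sqrt (1 + κ^2 * (ksum κ x y)^2) + κ * ksum κ x y := by
  have h : κ^2 * (ksum κ x y)^2 = (κ * ksum κ x y)^2 := by ring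
  rw [base_eq, base_eq, h, ksum_key, ← Real.cosh_sq']
  rw [Real.sqrt_sq (Real.cosh_pos _).le, Real.cosh_add_sinh, ← Real.exp_add]

theorem kexp_mul (κ : ℝ) (h0 : 0 < κ) (h1 : κ < 1) :
    (∀ x y : ℝ, kexp κ x * kexp κ y = kexp κ (ksum κ x y)) ∧
    (∀ x : ℝ, kexp κ x * kexp κ (-x) = 1) := by
  have main : ∀ x y : ℝ, kexp κ x * kexp κ y = kexp κ (ksum κ x y) := by
    intro x y
    unfold kexp
    rw [← Real.mul_rpow (base_pos κ x).le (base_pos κ y).le, base_mul]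
  refine ⟨main, fun x => ?_⟩
  have h : ksum κ x (-x) = 0 := by
    simp [ksum]
  rw [main x (-x), h]
  simp [kexp]
end

section
/- For real κ ≠ 0, the function exp_κ(x) = (√(1+κ²x²) + κx)^{1/κ} is differentiable on ℝ and satisfies √(1+κ²x²)·(d/dx) exp_κ(x) = exp_κ(x) for all x. -/
/-!
The base `b t = √(1 + t²) + t` is positive and satisfies `√(1 + t²) · b' t = b t`. By the chain
rule `x ↦ b (κ x)` has logarithmic derivative `κ / √(1 + κ²x²)`, and raising it to the power
`1 / κ` divides that logarithmic derivative by `κ`.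
-/

open Real

lemma sqrt_one_add_sq_add_pos (t : ℝ) : 0 < √(1 + t ^ 2) + t := by
  have : |t| < √(1 + t ^ 2) := (lt_sqrt (abs_nonneg t)).2 (by rw [sq_abs]; linarith)
  linarith [neg_abs_le t]

lemma hasDerivAt_sqrt_one_add_sq_add (t : ℝ) :
    HasDerivAt (fun t => √(1 + t ^ 2) + t) ((√(1 + t ^ 2) + t) / √(1 + t ^ 2)) t := by
  have hpos : 0 < 1 + t ^ 2 := by positivity
  have hsq : HasDerivAt (fun t => 1 + t ^ 2) (2 * t) t := by
    simpa using (hasDerivAt_pow 2 t).const_add 1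
  refine ((hsq.sqrt hpos.ne').add (hasDerivAt_id t)).congr_deriv ?_
  field_simp
  ring

lemma HasDerivAt.rpow_one_div_of_deriv_eq_mul_div {f : ℝ → ℝ} {x κ s : ℝ} (hκ : κ ≠ 0)
    (hfx : 0 < f x) (hf : HasDerivAt f (κ * f x / s) x) :
    HasDerivAt (fun y => f y ^ (1 / κ)) (f x ^ (1 / κ) / s) x := by
  refine (hf.rpow_const (p := 1 / κ) (Or.inl hfx.ne')).congr_deriv ?_
  rw [rpow_sub_one hfx.ne']
  field_simp

lemma hasDerivAt_kexp {κ : ℝ} (hκ : κ ≠ 0) (x : ℝ) :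
    HasDerivAt (kexp κ) (kexp κ x / √(1 + κ ^ 2 * x ^ 2)) x := by
  have hbase := (hasDerivAt_sqrt_one_add_sq_add (κ * x)).comp x ((hasDerivAt_id x).const_mul κ)
  have hkexp : kexp κ = fun y => (√(1 + (κ * y) ^ 2) + κ * y) ^ (1 / κ) := by
    funext y
    rw [kexp, mul_pow]
  rw [hkexp, ← mul_pow]
  exact HasDerivAt.rpow_one_div_of_deriv_eq_mul_div hκ (sqrt_one_add_sq_add_pos _)
    (hbase.congr_deriv (by ring))

theorem kexp_deriv (κ : ℝ) (hκ : κ ≠ 0) :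
    Differentiable ℝ (kexp κ) ∧
    ∀ x : ℝ, Real.sqrt (1 + κ^2 * x^2) * deriv (kexp κ) x = kexp κ x := by
  refine ⟨fun x => (hasDerivAt_kexp hκ x).differentiableAt, fun x => ?_⟩
  have hs : √(1 + κ ^ 2 * x ^ 2) ≠ 0 := (sqrt_pos.2 (by positivity)).ne'
  rw [(hasDerivAt_kexp hκ x).deriv, mul_div_cancel₀ _ hs]
end

section
/- For real κ with 0<κ<1, exp_κ(x)/x^{1/κ} tends to (2κ)^{1/κ} as x → +∞; equivalently exp_κ(x) ~ (2κx)^{1/κ} asymptotically. -/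
open Filter

theorem kexp_asymptotic (κ : ℝ) (h0 : 0 < κ) (h1 : κ < 1) :
    Tendsto (fun x : ℝ => kexp κ x / x ^ (1/κ : ℝ)) atTop
      (nhds ((2*κ) ^ (1/κ : ℝ))) := by
  have hbase : Tendsto (fun x : ℝ => (Real.sqrt (1 + κ^2 * x^2) + κ*x) / x) atTop
      (nhds (2*κ)) := by
    have heq : ∀ᶠ x : ℝ in atTop,
        (Real.sqrt (1 + κ^2 * x^2) + κ*x) / x = Real.sqrt (1/x^2 + κ^2) + κ := by
      filter_upwards [eventually_gt_atTop (0:ℝ)] with x hx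
      have hx2 : (0:ℝ) < x^2 := by positivity
      have e1 : 1/x^2 + κ^2 = (1 + κ^2 * x^2)/x^2 := by
        field_simp
      have : Real.sqrt (1/x^2 + κ^2) = Real.sqrt (1 + κ^2 * x^2) / x := by
        rw [e1, Real.sqrt_div (by positivity), Real.sqrt_sq hx.le]
      rw [add_div, ← this, mul_div_assoc, div_self hx.ne', mul_one]
    rw [tendsto_congr' heq]
    have h1 : Tendsto (fun x : ℝ => 1/x^2 + κ^2) atTop (nhds (0 + κ^2)) := by
      apply Tendsto.add_const
      simp only [one_div]
      exact (tendsto_pow_atTop (n := 2) (by norm_num)).inv_tendsto_atTop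
    have h2 : Tendsto (fun x : ℝ => Real.sqrt (1/x^2 + κ^2) + κ)
        atTop (nhds (Real.sqrt (0 + κ^2) + κ)) :=
      ((Real.continuous_sqrt.tendsto _).comp h1).add_const κ
    have : Real.sqrt (0 + κ^2) + κ = 2*κ := by
      rw [zero_add, Real.sqrt_sq h0.le]; ring
    rwa [this] at h2
  have hcont : Tendsto (fun t : ℝ => t ^ (1/κ : ℝ)) (nhds (2*κ))
      (nhds ((2*κ) ^ (1/κ : ℝ))) := by
    apply ContinuousAt.tendsto
    exact Real.continuousAt_rpow_const _ _ (Or.inl (by positivity))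
  have := hcont.comp hbase
  apply this.congr'
  filter_upwards [eventually_gt_atTop (0:ℝ)] with x hx
  have hnum : 0 ≤ Real.sqrt (1 + κ^2 * x^2) + κ*x := by positivity
  simp only [Function.comp, kexp]
  rw [Real.div_rpow hnum hx.le]
end

section
/- For real κ with 0<κ<1/2, ∫₀^∞ t·exp_κ(-t) dt = 1/(1-4κ²). -/
open Real Filter Topology MeasureTheory Set

theorem kexp_eq_exp_arsinh (κ x : ℝ) : kexp κ x = exp (arsinh (κ * x) / κ) := by
  rw [kexp, div_eq_mul_one_div (arsinh _), exp_mul, exp_arsinh, mul_pow, add_comm]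

noncomputable def sinhCoshExpPrimitive (c u : ℝ) : ℝ :=
  exp ((2 - c) * u) / (2 - c) + exp (-(2 + c) * u) / (2 + c)

theorem hasDerivAt_sinhCoshExpPrimitive {c : ℝ} (hc : 2 - c ≠ 0) (hc' : 2 + c ≠ 0) (u : ℝ) :
    HasDerivAt (sinhCoshExpPrimitive c) (4 * sinh u * cosh u * exp (-(c * u))) u := by
  have hderiv : HasDerivAt (sinhCoshExpPrimitive c)
      (exp ((2 - c) * u) - exp (-(2 + c) * u)) u := by
    have h₁ := ((hasDerivAt_id' u).const_mul (2 - c)).exp.div_const (2 - c)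
    have h₂ := ((hasDerivAt_id' u).const_mul (-(2 + c))).exp.div_const (2 + c)
    refine (h₁.add h₂).congr_deriv ?_
    field_simp
    ring
  convert hderiv using 1
  have e₁ : exp ((2 - c) * u) = exp u * exp u * exp (-(c * u)) := by
    rw [← exp_add, ← exp_add]; ring_nf
  have e₂ : exp (-(2 + c) * u) = exp (-u) * exp (-u) * exp (-(c * u)) := by
    rw [← exp_add, ← exp_add]; ring_nf
  rw [e₁, e₂, sinh_eq, cosh_eq]
  ring

theorem sinhCoshExpPrimitive_zero {c : ℝ} (hc : 2 - c ≠ 0) (hc' : 2 + c ≠ 0) :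
    sinhCoshExpPrimitive c 0 = 4 / (4 - c ^ 2) := by
  simp only [sinhCoshExpPrimitive, mul_zero, exp_zero]
  rw [show 4 - c ^ 2 = (2 - c) * (2 + c) by ring]
  field_simp
  ring

theorem tendsto_sinhCoshExpPrimitive_atTop {c : ℝ} (hc : 2 < c) :
    Tendsto (sinhCoshExpPrimitive c) atTop (𝓝 0) := by
  have decay : ∀ {a : ℝ}, a < 0 → Tendsto (fun u => exp (a * u)) atTop (𝓝 0) := fun ha =>
    tendsto_exp_atBot.comp (tendsto_id.const_mul_atTop_of_neg ha)
  rw [show (0 : ℝ) = 0 / (2 - c) + 0 / (2 + c) by simp]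
  exact ((decay (by linarith)).div_const _).add ((decay (by linarith)).div_const _)

theorem Real.tendsto_arsinh_atTop : Tendsto arsinh atTop atTop :=
  arsinh_strictMono.monotone.tendsto_atTop_atTop fun b => ⟨sinh b, (arsinh_sinh b).ge⟩

theorem hasDerivAt_sinhCoshExpPrimitive_arsinh {κ : ℝ} (hκ : κ ≠ 0) (hc : 2 - κ⁻¹ ≠ 0)
    (hc' : 2 + κ⁻¹ ≠ 0) (t : ℝ) :
    HasDerivAt (fun t => sinhCoshExpPrimitive κ⁻¹ (arsinh (κ * t)) / (4 * κ ^ 2))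
      (t * kexp κ (-t)) t := by
  have harsinh := ((hasDerivAt_id' t).const_mul κ).arsinh
  refine (((hasDerivAt_sinhCoshExpPrimitive hc hc' _).comp t harsinh).div_const _).congr_deriv ?_
  rw [kexp_eq_exp_arsinh, mul_neg, arsinh_neg, sinh_arsinh, cosh_arsinh, neg_div,
    div_eq_inv_mul, smul_eq_mul]
  field_simp

theorem kexp_integral_t (κ : ℝ) (h0 : 0 < κ) (h1 : κ < 1/2) :
    ∫ t in Set.Ioi (0:ℝ), t * kexp κ (-t) = 1/(1 - 4*κ^2) := by
  have hc : 2 < κ⁻¹ := by rw [lt_inv_comm₀ two_pos h0]; linarith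
  have hderiv := hasDerivAt_sinhCoshExpPrimitive_arsinh h0.ne' (by linarith) (by linarith)
  have hlim : Tendsto (fun t => sinhCoshExpPrimitive κ⁻¹ (arsinh (κ * t)) / (4 * κ ^ 2))
      atTop (𝓝 (0 / (4 * κ ^ 2))) :=
    ((tendsto_sinhCoshExpPrimitive_atTop hc).comp
      (tendsto_arsinh_atTop.comp (tendsto_id.const_mul_atTop h0))).div_const _
  have hnonneg : ∀ t ∈ Ioi (0 : ℝ), 0 ≤ t * kexp κ (-t) := fun t ht => by
    rw [kexp_eq_exp_arsinh]; exact mul_nonneg (le_of_lt ht) (exp_pos _).le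
  rw [integral_Ioi_of_hasDerivAt_of_nonneg' (fun t _ => hderiv t) hnonneg hlim]
  have hκ2 : 1 - 4 * κ ^ 2 ≠ 0 := by nlinarith
  rw [mul_zero, arsinh_zero, sinhCoshExpPrimitive_zero (by linarith) (by linarith),
    show 4 - κ⁻¹ ^ 2 = -(1 - 4 * κ ^ 2) / κ ^ 2 by field_simp; ring]
  field_simp
  ring
end
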